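/- (Theorem 2, Case (ii).) Let P ∈ ℝ^{n×n} be symmetric positive definite with nonpositive off-diagonal entries (−P is Metzler), Γ ∈ ℝ^{n×l₂} with Γ ≥ 0, and suppose ΓC₂ ≥ 0, ΓV_b ≥ 0, ΓD_b ≥ 0 (entrywise). Set L := P⁻¹Γ. Then L ≥ 0, LC₂ ≥ 0, LV_b ≥ 0, LD_b ≥ 0. Moreover, for any nonnegative sequence e^x_k ∈ ℝⁿ and vectors δ^ρ_k, δ^{ψ₂}_k, δ^v, δ^w, δ^ε ≥ 0 satisfying the error-dynamics equality e^x_{k+1} = |A−LC₂|·e^x_k + δ^ρ_k + |L|·δ^{ψ₂}_k + |Ŵ|·δ^w + (|V_a − LV_b| − |A−LC₂|·|ΛNV₂| + |ΛNV₂|)·δ^v + (|Λ| + |D_a − LD_b| − |A−LC₂|·|Λ|)·δ^ε and the bounds δ^ρ_k ≤ F̄_ρ·e^x_k, δ^{ψ₂}_k ≤ F̄_{ψ₂}·e^x_k, it holds (by the triangle inequality and the identities |LC₂| = LC₂, |LV_b| = LV_b, |LD_b| = LD_b) that e^x_{k+1} ≤ (|A| + LC₂ + F̄_ρ + L·F̄_{ψ₂})·e^x_k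 + (|V_a| + LV_b + |ΛNV₂|)·δ^v + |Ŵ|·δ^w + (|Λ| + |D_a| + LD_b)·δ^ε; i.e., the nonlinear error dynamics is upper-bounded by a linear comparison system in which the gain L enters linearly. -/

import Mathlib

/-!
If `P` is positive definite with nonpositive off-diagonal entries and `P x ≥ 0`, then the negative
part `x⁻` satisfies `x⁻ᵀ P x⁻ = x⁻ᵀ P x⁺ - x⁻ᵀ P x ≤ 0`: the first term only involves off-diagonal
entries because `x⁺` and `x⁻` have disjoint supports, and the second is a product of nonnegative
vectors. Positive definiteness forces `x⁻ = 0`, so `P⁻¹ ≥ 0` column by column, and hence the gain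
`L = P⁻¹ Γ` inherits every sign condition imposed on `Γ`. With `L C₂, L V_b, L D_b ≥ 0`, the
triangle inequality gives `|M - L X| ≤ |M| + L X` entrywise; dropping the nonpositive correction
terms and using the sector bounds on `δρ, δψ₂` yields the comparison system.
-/

open Matrix

/-- Entrywise nonnegative part `M⁺ = max(M, 0)` of a real matrix. -/
noncomputable def matPos {m n : ℕ} (M : Matrix (Fin m) (Fin n) ℝ) : Matrix (Fin m) (Fin n) ℝ :=
  Matrix.of fun i j => max (M i j) 0

/-- Entrywise `M⁻ = M⁺ − M`. -/
noncomputable def matNeg {m n : ℕ} (M : Matrix (Fin m) (Fin n) ℝ) : Matrix (Fin m) (Fin n) ℝ :=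
  matPos M - M

/-- Entrywise absolute value `|M| = M⁺ + M⁻`. -/
noncomputable def matAbs {m n : ℕ} (M : Matrix (Fin m) (Fin n) ℝ) : Matrix (Fin m) (Fin n) ℝ :=
  matPos M + matNeg M

namespace Matrix

variable {l m n R : Type*} [Fintype m]

section OrderedSemiring

variable [Semiring R] [PartialOrder R] [IsOrderedRing R]

lemma mul_apply_nonneg {M : Matrix l m R} {N : Matrix m n R}
    (hM : ∀ i j, 0 ≤ M i j) (hN : ∀ i j, 0 ≤ N i j) (i : l) (j : n) : 0 ≤ (M * N) i j :=
  Finset.sum_nonneg fun k _ => mul_nonneg (hM i k) (hN k j)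

lemma mulVec_le_mulVec_of_nonneg_right {M M' : Matrix l m R} (h : ∀ i j, M i j ≤ M' i j)
    {v : m → R} (hv : 0 ≤ v) : M *ᵥ v ≤ M' *ᵥ v :=
  fun i => dotProduct_le_dotProduct_of_nonneg_right (h i) hv

lemma mulVec_le_mulVec_of_nonneg_left {M : Matrix l m R} (hM : ∀ i j, 0 ≤ M i j) {v w : m → R}
    (hvw : v ≤ w) : M *ᵥ v ≤ M *ᵥ w :=
  fun i => dotProduct_le_dotProduct_of_nonneg_left hvw (hM i)

end OrderedSemiring

lemma dotProduct_mulVec_nonpos_of_offDiag_nonpos [CommRing R] [PartialOrder R]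
    [IsOrderedRing R] {P : Matrix m m R} (hP : ∀ i j, i ≠ j → P i j ≤ 0) {u v : m → R}
    (hu : 0 ≤ u) (hv : 0 ≤ v) (huv : ∀ i, u i * v i = 0) : u ⬝ᵥ (P *ᵥ v) ≤ 0 := by
  simp only [dotProduct, mulVec, Finset.mul_sum]
  refine Finset.sum_nonpos fun i _ => Finset.sum_nonpos fun j _ => ?_
  rcases eq_or_ne i j with rfl | hij
  · rw [mul_left_comm, huv, mul_zero]
  · exact mul_nonpos_of_nonneg_of_nonpos (hu i)
      (mul_nonpos_of_nonpos_of_nonneg (hP i j hij) (hv j))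

namespace PosDef

variable {P : Matrix m m ℝ}

lemma nonneg_of_mulVec_nonneg (hP : P.PosDef) (hPoff : ∀ i j, i ≠ j → P i j ≤ 0)
    {x : m → ℝ} (hx : 0 ≤ P *ᵥ x) : 0 ≤ x := by
  rw [← negPart_eq_zero]
  by_contra hne
  have hsplit : x⁻ = x⁺ - x := by rw [← sub_sub_cancel x⁺ x⁻, posPart_sub_negPart]
  have hcross : x⁻ ⬝ᵥ (P *ᵥ x⁺) ≤ 0 :=
    dotProduct_mulVec_nonpos_of_offDiag_nonpos hPoff (negPart_nonneg x) (posPart_nonneg x)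
      fun i => by rcases le_total 0 (x i) with h | h <;> simp [h]
  have hquad : x⁻ ⬝ᵥ (P *ᵥ x⁻) = x⁻ ⬝ᵥ (P *ᵥ x⁺) - x⁻ ⬝ᵥ (P *ᵥ x) := by
    rw [← dotProduct_sub, ← mulVec_sub, ← hsplit]
  have hpos := hP.dotProduct_mulVec_pos hne
  rw [star_trivial, hquad] at hpos
  linarith [dotProduct_nonneg_of_nonneg (negPart_nonneg x) hx]

lemma inv_apply_nonneg [DecidableEq m] (hP : P.PosDef) (hPoff : ∀ i j, i ≠ j → P i j ≤ 0)
    (i j : m) : 0 ≤ P⁻¹ i j := by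
  have hcol : 0 ≤ P *ᵥ (P⁻¹ *ᵥ Pi.single j 1) := by
    rw [mulVec_mulVec, mul_nonsing_inv P ((isUnit_iff_isUnit_det P).mp hP.isUnit), one_mulVec]
    exact Pi.single_nonneg.mpr zero_le_one
  simpa using hP.nonneg_of_mulVec_nonneg hPoff hcol i

end PosDef

end Matrix

section matAbs

variable {m n : ℕ} {M K : Matrix (Fin m) (Fin n) ℝ}

lemma matAbs_apply (M : Matrix (Fin m) (Fin n) ℝ) (i : Fin m) (j : Fin n) :
    matAbs M i j = |M i j| := by
  simp only [matAbs, matNeg, matPos, Matrix.add_apply, Matrix.sub_apply, Matrix.of_apply]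
  rcases le_total 0 (M i j) with h | h
  · rw [abs_of_nonneg h, max_eq_left h]; ring
  · rw [abs_of_nonpos h, max_eq_right h]; ring

lemma matAbs_nonneg (M : Matrix (Fin m) (Fin n) ℝ) (i : Fin m) (j : Fin n) :
    0 ≤ matAbs M i j := by
  rw [matAbs_apply]; exact abs_nonneg _

lemma matAbs_of_nonneg (hM : ∀ i j, 0 ≤ M i j) : matAbs M = M := by
  ext i j; rw [matAbs_apply, abs_of_nonneg (hM i j)]

lemma matAbs_sub_apply_le_of_nonneg (hK : ∀ i j, 0 ≤ K i j) (i : Fin m) (j : Fin n) :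
    matAbs (M - K) i j ≤ matAbs M i j + K i j := by
  simpa only [matAbs_apply, Matrix.sub_apply, abs_of_nonneg (hK i j)] using abs_sub (M i j) (K i j)

end matAbs

lemma error_step_le_comparison {n nv nw l2 : ℕ}
    {A Λ Da Fρ : Matrix (Fin n) (Fin n) ℝ} {L N : Matrix (Fin n) (Fin l2) ℝ}
    {C2 Db Fψ2 : Matrix (Fin l2) (Fin n) ℝ} {V2 Vb : Matrix (Fin l2) (Fin nv) ℝ}
    {Va : Matrix (Fin n) (Fin nv) ℝ} {What : Matrix (Fin n) (Fin nw) ℝ}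
    (hL : ∀ i j, 0 ≤ L i j) (hLC2 : ∀ i j, 0 ≤ (L * C2) i j)
    (hLVb : ∀ i j, 0 ≤ (L * Vb) i j) (hLDb : ∀ i j, 0 ≤ (L * Db) i j)
    {x δρ δε : Fin n → ℝ} {δψ2 : Fin l2 → ℝ} {δv : Fin nv → ℝ} {δw : Fin nw → ℝ}
    (hx : 0 ≤ x) (hδv : 0 ≤ δv) (hδε : 0 ≤ δε)
    (hρ : δρ ≤ Fρ *ᵥ x) (hψ2 : δψ2 ≤ Fψ2 *ᵥ x) :
    matAbs (A - L * C2) *ᵥ x + δρ + matAbs L *ᵥ δψ2 + matAbs What *ᵥ δw +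
        (matAbs (Va - L * Vb) - matAbs (A - L * C2) * matAbs (Λ * N * V2) +
          matAbs (Λ * N * V2)) *ᵥ δv +
        (matAbs Λ + matAbs (Da - L * Db) - matAbs (A - L * C2) * matAbs Λ) *ᵥ δε ≤
      (matAbs A + L * C2 + Fρ + L * Fψ2) *ᵥ x +
        (matAbs Va + L * Vb + matAbs (Λ * N * V2)) *ᵥ δv + matAbs What *ᵥ δw +
        (matAbs Λ + matAbs Da + L * Db) *ᵥ δε := by
  have hx_term : matAbs (A - L * C2) *ᵥ x ≤ (matAbs A + L * C2) *ᵥ x :=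
    mulVec_le_mulVec_of_nonneg_right (matAbs_sub_apply_le_of_nonneg hLC2) hx
  have hψ2_term : matAbs L *ᵥ δψ2 ≤ (L * Fψ2) *ᵥ x := by
    rw [matAbs_of_nonneg hL, ← mulVec_mulVec]
    exact mulVec_le_mulVec_of_nonneg_left hL hψ2
  have hv_term : (matAbs (Va - L * Vb) - matAbs (A - L * C2) * matAbs (Λ * N * V2) +
      matAbs (Λ * N * V2)) *ᵥ δv ≤ (matAbs Va + L * Vb + matAbs (Λ * N * V2)) *ᵥ δv := by
    refine mulVec_le_mulVec_of_nonneg_right (fun i j => ?_) hδv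
    simp only [Matrix.add_apply, Matrix.sub_apply]
    linarith [matAbs_sub_apply_le_of_nonneg (M := Va) hLVb i j,
      mul_apply_nonneg (matAbs_nonneg (A - L * C2)) (matAbs_nonneg (Λ * N * V2)) i j]
  have hε_term : (matAbs Λ + matAbs (Da - L * Db) - matAbs (A - L * C2) * matAbs Λ) *ᵥ δε ≤
      (matAbs Λ + matAbs Da + L * Db) *ᵥ δε := by
    refine mulVec_le_mulVec_of_nonneg_right (fun i j => ?_) hδε
    simp only [Matrix.add_apply, Matrix.sub_apply]
    linarith [matAbs_sub_apply_le_of_nonneg (M := Da) hLDb i j,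
      mul_apply_nonneg (matAbs_nonneg (A - L * C2)) (matAbs_nonneg Λ) i j]
  intro i
  have hx_i := hx_term i
  have hψ2_i := hψ2_term i
  have hv_i := hv_term i
  have hε_i := hε_term i
  simp only [add_mulVec, Pi.add_apply] at hx_i hψ2_i hv_i hε_i ⊢
  linarith [hρ i]

theorem iss_synthesis_case_ii_general
    {n nw nv l2 : ℕ}
    (V2 : Matrix (Fin l2) (Fin nv) ℝ)
    (C2 : Matrix (Fin l2) (Fin n) ℝ)
    (A Λ : Matrix (Fin n) (Fin n) ℝ) (N : Matrix (Fin n) (Fin l2) ℝ)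
    (Va : Matrix (Fin n) (Fin nv) ℝ)
    (Vb : Matrix (Fin l2) (Fin nv) ℝ)
    (Da : Matrix (Fin n) (Fin n) ℝ)
    (Db : Matrix (Fin l2) (Fin n) ℝ)
    (What : Matrix (Fin n) (Fin nw) ℝ)
    (Fρ : Matrix (Fin n) (Fin n) ℝ) (Fψ2 : Matrix (Fin l2) (Fin n) ℝ)
    (P : Matrix (Fin n) (Fin n) ℝ) (hP : P.PosDef)
    (hPoff : ∀ i j, i ≠ j → P i j ≤ 0)
    (Γ : Matrix (Fin n) (Fin l2) ℝ) (hΓ : ∀ i j, 0 ≤ Γ i j)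
    (hΓC2 : ∀ i j, 0 ≤ (Γ * C2) i j)
    (hΓVb : ∀ i j, 0 ≤ (Γ * Vb) i j)
    (hΓDb : ∀ i j, 0 ≤ (Γ * Db) i j)
    (L : Matrix (Fin n) (Fin l2) ℝ) (hL : L = P⁻¹ * Γ) :
    (∀ i j, 0 ≤ L i j) ∧
    (∀ i j, 0 ≤ (L * C2) i j) ∧
    (∀ i j, 0 ≤ (L * Vb) i j) ∧
    (∀ i j, 0 ≤ (L * Db) i j) ∧
    (∀ (e : ℕ → Fin n → ℝ) (δρ : ℕ → Fin n → ℝ) (δψ2 : ℕ → Fin l2 → ℝ)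
      (δv : Fin nv → ℝ) (δw : Fin nw → ℝ) (δε : Fin n → ℝ),
      (∀ k, 0 ≤ e k) → (∀ k, 0 ≤ δρ k) → (∀ k, 0 ≤ δψ2 k) →
      0 ≤ δv → 0 ≤ δw → 0 ≤ δε →
      (∀ k, e (k + 1) =
        (matAbs (A - L * C2)).mulVec (e k) + δρ k + (matAbs L).mulVec (δψ2 k) +
        (matAbs What).mulVec δw +
        (matAbs (Va - L * Vb) - matAbs (A - L * C2) * matAbs (Λ * N * V2) +
          matAbs (Λ * N * V2)).mulVec δv +
        (matAbs Λ + matAbs (Da - L * Db) - matAbs (A - L * C2) * matAbs Λ).mulVec δε) →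
      (∀ k, δρ k ≤ Fρ.mulVec (e k)) → (∀ k, δψ2 k ≤ Fψ2.mulVec (e k)) →
      ∀ k, e (k + 1) ≤
        (matAbs A + L * C2 + Fρ + L * Fψ2).mulVec (e k) +
        (matAbs Va + L * Vb + matAbs (Λ * N * V2)).mulVec δv +
        (matAbs What).mulVec δw +
        (matAbs Λ + matAbs Da + L * Db).mulVec δε) := by
  have hPinv := hP.inv_apply_nonneg hPoff
  have hLX {p : ℕ} {X : Matrix (Fin l2) (Fin p) ℝ} (hΓX : ∀ i j, 0 ≤ (Γ * X) i j) :
      ∀ i j, 0 ≤ (L * X) i j := by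
    rw [hL, Matrix.mul_assoc]; exact mul_apply_nonneg hPinv hΓX
  have hL0 : ∀ i j, 0 ≤ L i j := by
    rw [hL]; exact mul_apply_nonneg hPinv hΓ
  refine ⟨hL0, hLX hΓC2, hLX hΓVb, hLX hΓDb, ?_⟩
  intro e δρ δψ2 δv δw δε he _ _ hδv _ hδε heq hρ hψ2 k
  rw [heq k]
  exact error_step_le_comparison hL0 (hLX hΓC2) (hLX hΓVb) (hLX hΓDb) (he k) hδv hδε (hρ k)
    (hψ2 k)

/-- Theorem 2, Case (ii): positivity of the designed gain and the
linear comparison system for the error dynamics, with the gain entering linearly. -/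
theorem iss_synthesis_case_ii
    {n nw nv p1 l2 : ℕ}
    (W : Matrix (Fin n) (Fin nw) ℝ) (G1 : Matrix (Fin n) (Fin p1) ℝ)
    (V1 : Matrix (Fin p1) (Fin nv) ℝ) (V2 : Matrix (Fin l2) (Fin nv) ℝ)
    (C2 : Matrix (Fin l2) (Fin n) ℝ) (S : Matrix (Fin p1) (Fin p1) ℝ)
    (A Λ : Matrix (Fin n) (Fin n) ℝ) (N : Matrix (Fin n) (Fin l2) ℝ)
    (Va : Matrix (Fin n) (Fin nv) ℝ)
    (hVa : Va = A * Λ * N * V2 + Λ * (1 - N * C2) * G1 * S * V1)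
    (Vb : Matrix (Fin l2) (Fin nv) ℝ) (hVb : Vb = (C2 * Λ * N - 1) * V2)
    (Da : Matrix (Fin n) (Fin n) ℝ) (hDa : Da = A * Λ)
    (Db : Matrix (Fin l2) (Fin n) ℝ) (hDb : Db = C2 * Λ)
    (What : Matrix (Fin n) (Fin nw) ℝ) (hWhat : What = Λ * (1 - N * C2) * W)
    (Fρ : Matrix (Fin n) (Fin n) ℝ) (Fψ2 : Matrix (Fin l2) (Fin n) ℝ)
    (hFρ : ∀ i j, 0 ≤ Fρ i j) (hFψ2 : ∀ i j, 0 ≤ Fψ2 i j)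
    (P : Matrix (Fin n) (Fin n) ℝ) (hP : P.PosDef)
    (hPoff : ∀ i j, i ≠ j → P i j ≤ 0)
    (Γ : Matrix (Fin n) (Fin l2) ℝ) (hΓ : ∀ i j, 0 ≤ Γ i j)
    (hΓC2 : ∀ i j, 0 ≤ (Γ * C2) i j)
    (hΓVb : ∀ i j, 0 ≤ (Γ * Vb) i j)
    (hΓDb : ∀ i j, 0 ≤ (Γ * Db) i j)
    (L : Matrix (Fin n) (Fin l2) ℝ) (hL : L = P⁻¹ * Γ) :
    (∀ i j, 0 ≤ L i j) ∧
    (∀ i j, 0 ≤ (L * C2) i j) ∧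
    (∀ i j, 0 ≤ (L * Vb) i j) ∧
    (∀ i j, 0 ≤ (L * Db) i j) ∧
    (∀ (e : ℕ → Fin n → ℝ) (δρ : ℕ → Fin n → ℝ) (δψ2 : ℕ → Fin l2 → ℝ)
      (δv : Fin nv → ℝ) (δw : Fin nw → ℝ) (δε : Fin n → ℝ),
      (∀ k, 0 ≤ e k) → (∀ k, 0 ≤ δρ k) → (∀ k, 0 ≤ δψ2 k) →
      0 ≤ δv → 0 ≤ δw → 0 ≤ δε →
      (∀ k, e (k + 1) =
        (matAbs (A - L * C2)).mulVec (e k) + δρ k + (matAbs L).mulVec (δψ2 k) +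
        (matAbs What).mulVec δw +
        (matAbs (Va - L * Vb) - matAbs (A - L * C2) * matAbs (Λ * N * V2) +
          matAbs (Λ * N * V2)).mulVec δv +
        (matAbs Λ + matAbs (Da - L * Db) - matAbs (A - L * C2) * matAbs Λ).mulVec δε) →
      (∀ k, δρ k ≤ Fρ.mulVec (e k)) → (∀ k, δψ2 k ≤ Fψ2.mulVec (e k)) →
      ∀ k, e (k + 1) ≤
        (matAbs A + L * C2 + Fρ + L * Fψ2).mulVec (e k) +
        (matAbs Va + L * Vb + matAbs (Λ * N * V2)).mulVec δv +
        (matAbs What).mulVec δw +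
        (matAbs Λ + matAbs Da + L * Db).mulVec δε) :=
  iss_synthesis_case_ii_general V2 C2 A Λ N Va Vb Da Db What Fρ Fψ2 P hP hPoff Γ hΓ hΓC2 hΓVb hΓDb L
    hL
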